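/- arXiv:1508.01846 — 3 statements merged into one kernel-verified Lean document; each statement's English description precedes it below -/
import Mathlib

section
/- Let F, H : ℝ^N → ℝ be twice continuously differentiable, k : ℝ → ℝ^N a differentiable curve and λ : ℝ → ℝ a differentiable function such that for all h in an open interval I: ∇F(k(h)) = λ(h) · ∇H(k(h)) and H(k(h)) = h. Let M(h) be the Hessian of F − λ(h)·H at k(h) and R(h) = ∇H(k(h)). If M(h) is invertible and ⟨R(h), adj(M(h)) · R(h)⟩ ≠ 0, then k'(h) = (adj(M(h)) · R(h)) / ⟨R(h), adj(M(h)) · R(h)⟩, where adj denotes the adjugate matrix. -/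
/-!
Differentiating the Lagrange condition `∇F(k h) = λ(h) ∇H(k h)` along the curve gives
`M k' = λ' R` (the Hessian of `F - λ(h) H` is symmetric, so it acts on `k'` from either side),
and differentiating the constraint `H(k h) = h` gives `⟨R, k'⟩ = 1`. Multiplying the first
identity by `adj M` yields `det M • k' = λ' • adj M R`; pairing with `R` gives
`det M = λ' ⟨R, adj M R⟩`, and solving for `k'` leaves the stated formula.
-/

/-- The Hessian matrix of `G : ℝ^N → ℝ` at `x`, with entries `∂²G/∂k_i∂k_j`. -/
noncomputable def hessianMatrix {N : ℕ} (G : EuclideanSpace ℝ (Fin N) → ℝ)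
    (x : EuclideanSpace ℝ (Fin N)) : Matrix (Fin N) (Fin N) ℝ :=
  Matrix.of fun i j =>
    fderiv ℝ (fun y => fderiv ℝ G y (EuclideanSpace.single j 1)) x (EuclideanSpace.single i 1)

/-- View a vector of `ℝ^N` (Euclidean space) as a plain tuple `Fin N → ℝ`. -/
def toVec {N : ℕ} (v : EuclideanSpace ℝ (Fin N)) : Fin N → ℝ := v

open Matrix Filter Topology

theorem Matrix.eq_inv_dotProduct_smul_adjugate_mulVec {n K : Type*} [Fintype n] [DecidableEq n]
    [Field K] {M : Matrix n n K} {R v : n → K} {c : K} (hdet : M.det ≠ 0)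
    (hMv : M *ᵥ v = c • R) (hRv : R ⬝ᵥ v = 1) :
    v = (R ⬝ᵥ M.adjugate *ᵥ R)⁻¹ • M.adjugate *ᵥ R := by
  have hdet_v : M.det • v = c • M.adjugate *ᵥ R := by
    rw [← mulVec_smul, ← hMv, mulVec_mulVec, adjugate_mul, smul_mulVec, one_mulVec]
  have hdet_eq : M.det = c * (R ⬝ᵥ M.adjugate *ᵥ R) := by
    simpa [dotProduct_smul, hRv] using congrArg (R ⬝ᵥ ·) hdet_v
  rw [← smul_right_inj hdet, hdet_v, smul_smul, hdet_eq, mul_assoc,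
    mul_inv_cancel₀ (right_ne_zero_of_mul (hdet_eq ▸ hdet)), mul_one]

theorem ContDiffAt.differentiableAt_fderiv {𝕜 E F : Type*} [NontriviallyNormedField 𝕜]
    [NormedAddCommGroup E] [NormedSpace 𝕜 E] [NormedAddCommGroup F] [NormedSpace 𝕜 F]
    {f : E → F} {x : E} (hf : ContDiffAt 𝕜 2 f x) : DifferentiableAt 𝕜 (fderiv 𝕜 f) x :=
  (hf.fderiv_right (m := 1) le_rfl).differentiableAt one_ne_zero

section

variable {N : ℕ}

local notation "E" => EuclideanSpace ℝ (Fin N)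

theorem toVec_gradient_dotProduct (f : E → ℝ) (x v : E) :
    toVec (gradient f x) ⬝ᵥ toVec v = fderiv ℝ f x v := by
  rw [← inner_gradient_left, EuclideanSpace.inner_eq_star_dotProduct, dotProduct_comm]
  rfl

theorem toVec_gradient_apply (f : E → ℝ) (x : E) (j : Fin N) :
    toVec (gradient f x) j = fderiv ℝ f x (EuclideanSpace.single j 1) := by
  rw [← toVec_gradient_dotProduct]
  simp [toVec]

theorem hessianMatrix_apply {f : E → ℝ} {x : E} (hf : DifferentiableAt ℝ (fderiv ℝ f) x)
    (i j : Fin N) :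
    hessianMatrix f x i j =
      fderiv ℝ (fderiv ℝ f) x (EuclideanSpace.single i 1) (EuclideanSpace.single j 1) := by
  simp [hessianMatrix, fderiv_clm_apply hf (differentiableAt_const _)]

theorem hessianMatrix_mulVec_apply {f : E → ℝ} {x : E} (hf : ContDiffAt ℝ 2 f x) (v : E)
    (j : Fin N) :
    (hessianMatrix f x *ᵥ toVec v) j =
      fderiv ℝ (fderiv ℝ f) x v (EuclideanSpace.single j 1) := by
  rw [hf.isSymmSndFDerivAt (by simp)]
  conv_rhs => rw [← (EuclideanSpace.basisFun (Fin N) ℝ).sum_repr v]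
  simp [mulVec, dotProduct, hessianMatrix_apply hf.differentiableAt_fderiv, toVec, mul_comm]

theorem hessianMatrix_sub_const_mul {F H : E → ℝ} {x : E} (hF : ContDiffAt ℝ 2 F x)
    (hH : ContDiffAt ℝ 2 H x) (c : ℝ) :
    hessianMatrix (fun y => F y - c * H y) x = hessianMatrix F x - c • hessianMatrix H x := by
  have hfderiv : fderiv ℝ (fun y => F y - c * H y) =ᶠ[𝓝 x]
      fderiv ℝ F - c • fderiv ℝ H := by
    filter_upwards [hF.eventually (by simp), hH.eventually (by simp)] with y hFy hHy
    rw [fderiv_fun_sub (hFy.differentiableAt two_ne_zero)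
      ((hHy.differentiableAt two_ne_zero).const_mul c),
      fderiv_const_mul (hHy.differentiableAt two_ne_zero)]
    rfl
  have hF' := hF.differentiableAt_fderiv
  have hH' := hH.differentiableAt_fderiv
  ext i j
  rw [hessianMatrix_apply (hF.sub (contDiffAt_const.mul hH)).differentiableAt_fderiv,
    hfderiv.fderiv_eq, fderiv_sub hF' (hH'.const_smul c), fderiv_const_smul hH']
  simp [hessianMatrix_apply hF', hessianMatrix_apply hH']

theorem hasDerivAt_toVec_gradient_comp {f : E → ℝ} {k : ℝ → E} {t : ℝ}
    (hf : ContDiffAt ℝ 2 f (k t)) (hk : DifferentiableAt ℝ k t) :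
    HasDerivAt (fun s => toVec (gradient f (k s)))
      (hessianMatrix f (k t) *ᵥ toVec (deriv k t)) t := by
  refine hasDerivAt_pi.2 fun j => ?_
  simp only [toVec_gradient_apply, hessianMatrix_mulVec_apply hf]
  exact (hf.differentiableAt_fderiv.hasFDerivAt.comp_hasDerivAt t hk.hasDerivAt).clm_apply (hasDerivAt_const _ _)
    |>.congr_deriv (by simp)

theorem hessianMatrix_mulVec_deriv_of_gradient_eq_smul {F H : E → ℝ} {k : ℝ → E} {lam : ℝ → ℝ}
    {t : ℝ} (hF : ContDiffAt ℝ 2 F (k t)) (hH : ContDiffAt ℝ 2 H (k t))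
    (hk : DifferentiableAt ℝ k t) (hlam : DifferentiableAt ℝ lam t)
    (hLag : ∀ᶠ s in 𝓝 t, gradient F (k s) = lam s • gradient H (k s)) :
    hessianMatrix (fun x => F x - lam t * H x) (k t) *ᵥ toVec (deriv k t) =
      deriv lam t • toVec (gradient H (k t)) := by
  have hderiv := (hasDerivAt_toVec_gradient_comp hF hk).unique <|
    (hlam.hasDerivAt.smul (hasDerivAt_toVec_gradient_comp hH hk)).congr_of_eventuallyEq <|
      hLag.mono fun s hs => congrArg toVec hs
  rw [hessianMatrix_sub_const_mul hF hH, sub_mulVec, smul_mulVec, hderiv]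
  abel

theorem toVec_gradient_dotProduct_deriv_eq_one {H : E → ℝ} {k : ℝ → E} {t : ℝ}
    (hH : DifferentiableAt ℝ H (k t)) (hk : DifferentiableAt ℝ k t)
    (hcon : ∀ᶠ s in 𝓝 t, H (k s) = s) :
    toVec (gradient H (k t)) ⬝ᵥ toVec (deriv k t) = 1 := by
  rw [toVec_gradient_dotProduct]
  exact (hH.hasFDerivAt.comp_hasDerivAt t hk.hasDerivAt).unique
    ((hasDerivAt_id t).congr_of_eventuallyEq hcon)

end

/-- Along an h-parametrized Lagrange solution curve
(`∇F(k h) = λ(h) • ∇H(k h)` and `H(k h) = h`), with `M(h)` the Hessian of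
`F − λ(h)·H` at `k h` and `R(h) = ∇H(k h)`, if `M(h)` is invertible and
`⟨R(h), adj(M(h))·R(h)⟩ ≠ 0`, then
`k'(h) = (adj(M(h))·R(h)) / ⟨R(h), adj(M(h))·R(h)⟩`. -/
theorem deriv_k_eq_adjugate_formula {N : ℕ}
    (F H : EuclideanSpace ℝ (Fin N) → ℝ)
    (hF : ContDiff ℝ 2 F) (hH : ContDiff ℝ 2 H)
    (k : ℝ → EuclideanSpace ℝ (Fin N)) (hk : Differentiable ℝ k)
    (lam : ℝ → ℝ) (hlam : Differentiable ℝ lam)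
    (a b : ℝ)
    (hLag : ∀ h ∈ Set.Ioo a b, gradient F (k h) = lam h • gradient H (k h))
    (hcon : ∀ h ∈ Set.Ioo a b, H (k h) = h) :
    ∀ h ∈ Set.Ioo a b,
      (hessianMatrix (fun x => F x - lam h * H x) (k h)).det ≠ 0 →
      dotProduct (toVec (gradient H (k h)))
          ((hessianMatrix (fun x => F x - lam h * H x) (k h)).adjugate.mulVec
            (toVec (gradient H (k h)))) ≠ 0 →
      deriv k h =
        (dotProduct (toVec (gradient H (k h)))
            ((hessianMatrix (fun x => F x - lam h * H x) (k h)).adjugate.mulVec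
              (toVec (gradient H (k h)))))⁻¹ •
          (hessianMatrix (fun x => F x - lam h * H x) (k h)).adjugate.mulVec
            (toVec (gradient H (k h))) := by
  intro h hh hdet _
  have hnhds : Set.Ioo a b ∈ 𝓝 h := isOpen_Ioo.mem_nhds hh
  exact eq_inv_dotProduct_smul_adjugate_mulVec hdet
    (hessianMatrix_mulVec_deriv_of_gradient_eq_smul hF.contDiffAt hH.contDiffAt (hk h) (hlam h)
      (eventually_of_mem hnhds hLag))
    (toVec_gradient_dotProduct_deriv_eq_one (hH.differentiable two_ne_zero _) (hk h)
      (eventually_of_mem hnhds hcon))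
end

section
/- Let F, H : ℝ^N → ℝ be twice continuously differentiable, k : ℝ → ℝ^N a differentiable curve and λ : ℝ → ℝ a differentiable function such that for all h in an open interval I: ∇F(k(h)) = λ(h) · ∇H(k(h)) and H(k(h)) = h. Let M(h) be the Hessian of F − λ(h)·H at k(h). If at some point h₀ ∈ I the multiplier has a critical point, λ'(h₀) = 0, then the Hessian matrix M(h₀) is singular: det(M(h₀)) = 0. -/
open Filter Topology Asymptotics Matrix

section Calculus

variable {E F : Type*} [NormedAddCommGroup E] [NormedSpace ℝ E]
  [NormedAddCommGroup F] [NormedSpace ℝ F]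

theorem HasDerivAt.smul_of_continuousAt_of_eq_zero {μ : ℝ → ℝ} {g : ℝ → F} {t : ℝ}
    (hμ : HasDerivAt μ 0 t) (hμt : μ t = 0) (hg : ContinuousAt g t) :
    HasDerivAt (fun s => μ s • g s) 0 t := by
  rw [hasDerivAt_iff_isLittleO] at hμ ⊢
  simp only [hμt, sub_zero, smul_zero] at hμ ⊢
  simpa using hμ.smul_isBigO (hg.isBigO_one ℝ)

theorem fderiv_apply_deriv_eq_one_of_eventually_comp_eq_id {H : E → ℝ} {k : ℝ → E} {t : ℝ}
    (hH : DifferentiableAt ℝ H (k t)) (hk : DifferentiableAt ℝ k t)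
    (hcon : ∀ᶠ s in 𝓝 t, H (k s) = s) :
    fderiv ℝ H (k t) (deriv k t) = 1 :=
  (hH.hasFDerivAt.comp_hasDerivAt t hk.hasDerivAt).unique
    ((hasDerivAt_id t).congr_of_eventuallyEq hcon)

theorem fderiv_apply_deriv_eq_zero_of_eventually_eq_smul {Φ Ψ : E → F} {k : ℝ → E}
    {μ : ℝ → ℝ} {t : ℝ} (hΦ : DifferentiableAt ℝ Φ (k t)) (hk : DifferentiableAt ℝ k t)
    (hμ : HasDerivAt μ 0 t) (hμt : μ t = 0) (hΨ : ContinuousAt (fun s => Ψ (k s)) t)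
    (hΦΨ : ∀ᶠ s in 𝓝 t, Φ (k s) = μ s • Ψ (k s)) :
    fderiv ℝ Φ (k t) (deriv k t) = 0 :=
  (hΦ.hasFDerivAt.comp_hasDerivAt t hk.hasDerivAt).unique
    ((hμ.smul_of_continuousAt_of_eq_zero hμt hΨ).congr_of_eventuallyEq hΦΨ)

end Calculus

section Gradient

variable {E : Type*} [NormedAddCommGroup E] [InnerProductSpace ℝ E] [CompleteSpace E]

theorem fderiv_eq_smul_of_gradient_eq_smul {F H : E → ℝ} {x : E} {c : ℝ}
    (h : gradient F x = c • gradient H x) : fderiv ℝ F x = c • fderiv ℝ H x := by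
  rw [← toDual_gradient, h, map_smulₛₗ, toDual_gradient]
  rfl

theorem fderiv_sub_const_mul_of_gradient_eq_smul {F H : E → ℝ} {x : E} {c l : ℝ}
    (hF : DifferentiableAt ℝ F x) (hH : DifferentiableAt ℝ H x)
    (hLag : gradient F x = l • gradient H x) :
    fderiv ℝ (fun y => F y - c * H y) x = (l - c) • fderiv ℝ H x := by
  rw [fderiv_fun_sub hF (hH.const_mul c), fderiv_const_mul hH,
    fderiv_eq_smul_of_gradient_eq_smul hLag, sub_smul]

end Gradient

section Hessian

variable {N : ℕ}

theorem vecMul_hessianMatrix {G : EuclideanSpace ℝ (Fin N) → ℝ} {x : EuclideanSpace ℝ (Fin N)}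
    (hG : DifferentiableAt ℝ (fderiv ℝ G) x) (v : EuclideanSpace ℝ (Fin N)) :
    v.ofLp ᵥ* hessianMatrix G x =
      fun j => fderiv ℝ (fderiv ℝ G) x v (EuclideanSpace.single j 1) := by
  ext j
  have hv : ∑ i, v i • EuclideanSpace.single i (1 : ℝ) = v := by
    simpa [EuclideanSpace.basisFun_apply] using (EuclideanSpace.basisFun (Fin N) ℝ).sum_repr v
  conv_rhs => rw [← hv]
  simp [vecMul, dotProduct, hessianMatrix, fderiv_clm_apply hG (differentiableAt_const _)]

/-- A null vector of the first slot of `D²G x` is a left null vector of `hessianMatrix G x`,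
so no symmetry of second derivatives is needed. -/
theorem det_hessianMatrix_eq_zero_of_fderiv_fderiv_eq_zero
    {G : EuclideanSpace ℝ (Fin N) → ℝ} {x v : EuclideanSpace ℝ (Fin N)}
    (hG : DifferentiableAt ℝ (fderiv ℝ G) x) (hv : v ≠ 0)
    (hker : fderiv ℝ (fderiv ℝ G) x v = 0) : (hessianMatrix G x).det = 0 :=
  exists_vecMul_eq_zero_iff.mp
    ⟨v.ofLp, by simpa using hv, by rw [vecMul_hessianMatrix hG, hker]; rfl⟩

end Hessian

/-- Along an h-parametrized Lagrange solution curve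
(`∇F(k h) = λ(h) • ∇H(k h)` and `H(k h) = h`), if the multiplier has a critical
point `λ'(h₀) = 0` at some `h₀` in the interval, then the Hessian `M(h₀)` of
`F − λ(h₀)·H` at `k h₀` is singular: `det M(h₀) = 0`. -/
theorem det_hessian_eq_zero_at_multiplier_critical_point {N : ℕ}
    (F H : EuclideanSpace ℝ (Fin N) → ℝ)
    (hF : ContDiff ℝ 2 F) (hH : ContDiff ℝ 2 H)
    (k : ℝ → EuclideanSpace ℝ (Fin N)) (hk : Differentiable ℝ k)
    (lam : ℝ → ℝ) (hlam : Differentiable ℝ lam)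
    (a b : ℝ)
    (hLag : ∀ h ∈ Set.Ioo a b, gradient F (k h) = lam h • gradient H (k h))
    (hcon : ∀ h ∈ Set.Ioo a b, H (k h) = h)
    (h₀ : ℝ) (hh₀ : h₀ ∈ Set.Ioo a b) (hcrit : deriv lam h₀ = 0) :
    (hessianMatrix (fun x => F x - lam h₀ * H x) (k h₀)).det = 0 := by
  have hG : ContDiff ℝ 2 (fun x => F x - lam h₀ * H x) := hF.sub (contDiff_const.mul hH)
  have hD2G : DifferentiableAt ℝ (fderiv ℝ fun x => F x - lam h₀ * H x) (k h₀) :=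
    (hG.fderiv_right (m := 1) le_rfl).differentiable one_ne_zero (k h₀)
  have hnear : Set.Ioo a b ∈ 𝓝 h₀ := Ioo_mem_nhds hh₀.1 hh₀.2
  have hunit : fderiv ℝ H (k h₀) (deriv k h₀) = 1 :=
    fderiv_apply_deriv_eq_one_of_eventually_comp_eq_id (hH.differentiable two_ne_zero _)
      (hk h₀) (eventually_of_mem hnear hcon)
  have hk₀ : deriv k h₀ ≠ 0 := fun h0 => by simp [h0] at hunit
  refine det_hessianMatrix_eq_zero_of_fderiv_fderiv_eq_zero hD2G hk₀ ?_
  have hμ : HasDerivAt (fun h => lam h - lam h₀) 0 h₀ :=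
    hcrit ▸ (hlam h₀).hasDerivAt.sub_const (lam h₀)
  refine fderiv_apply_deriv_eq_zero_of_eventually_eq_smul hD2G (hk h₀) hμ (sub_self _)
    ((hH.continuous_fderiv two_ne_zero).continuousAt.comp (hk h₀).continuousAt)
    (eventually_of_mem hnear fun h hh => ?_)
  exact fderiv_sub_const_mul_of_gradient_eq_smul (hF.differentiable two_ne_zero _)
    (hH.differentiable two_ne_zero _) (hLag h hh)
end

section
/- Let F, H : ℝ^N → ℝ be twice continuously differentiable and let k : ℝ → ℝ^N be a differentiable curve with ∇F(k(λ)) = λ · ∇H(k(λ)) for all λ in an open interval I. Suppose the Hessian M(λ) of F − λH at k(λ) is invertible and write R(λ) = ∇H(k(λ)). Then, setting h(λ) = H(k(λ)) and f(λ) = F(k(λ)), one has h'(λ) = ⟨R(λ), M(λ)⁻¹ R(λ)⟩ and f'(λ) = λ · ⟨R(λ), M(λ)⁻¹ R(λ)⟩ for all λ ∈ I. -/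
/-!
Fix `λ` and put `G = F - λ H`. By the Lagrange equation, `∇G (k s) = (s - λ) ∇H (k s)`
for `s` near `λ`; differentiating at `s = λ` gives `k'(λ)ᵀ M(λ) = R(λ)ᵀ`, hence
`k'(λ) = M(λ)⁻ᵀ R(λ)`. The chain rule then gives `h' = ⟨k', R⟩ = ⟨R, M⁻¹ R⟩` and
`f' = ⟨k', ∇F⟩ = λ ⟨k', R⟩`.
-/

open Filter Topology Matrix

theorem ContDiff.differentiable_fderiv_apply {E F : Type*} [NormedAddCommGroup E]
    [NormedSpace ℝ E] [NormedAddCommGroup F] [NormedSpace ℝ F] {G : E → F}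
    (hG : ContDiff ℝ 2 G) (v : E) : Differentiable ℝ fun y => fderiv ℝ G y v :=
  ((hG.fderiv_right (m := 1) (by norm_num)).differentiable (by norm_num)).clm_apply
    (differentiable_const v)

theorem gradient_sub_const_mul {E : Type*} [NormedAddCommGroup E] [InnerProductSpace ℝ E]
    [CompleteSpace E] {F H : E → ℝ} {x : E} (c : ℝ) (hF : DifferentiableAt ℝ F x)
    (hH : DifferentiableAt ℝ H x) :
    gradient (fun y => F y - c * H y) x = gradient F x - c • gradient H x := by
  refine HasGradientAt.gradient ?_
  rw [hasGradientAt_iff_hasFDerivAt, map_sub, map_smul]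
  exact (hF.hasGradientAt.hasFDerivAt).sub ((hH.hasGradientAt.hasFDerivAt).const_mul c)

section EuclideanSpace

variable {N : ℕ}

theorem gradient_apply_eq_fderiv_single (G : EuclideanSpace ℝ (Fin N) → ℝ)
    (x : EuclideanSpace ℝ (Fin N)) (j : Fin N) :
    gradient G x j = fderiv ℝ G x (EuclideanSpace.single j 1) := by
  rw [← inner_gradient_left, EuclideanSpace.inner_single_right]
  simp

theorem fderiv_apply_eq_dotProduct_gradient (G : EuclideanSpace ℝ (Fin N) → ℝ)
    (x v : EuclideanSpace ℝ (Fin N)) :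
    fderiv ℝ G x v = toVec v ⬝ᵥ toVec (gradient G x) := by
  rw [← inner_gradient_left, EuclideanSpace.inner_eq_star_dotProduct, star_trivial]
  rfl

theorem vecMul_hessianMatrix_apply (G : EuclideanSpace ℝ (Fin N) → ℝ)
    (x v : EuclideanSpace ℝ (Fin N)) (j : Fin N) :
    (toVec v ᵥ* hessianMatrix G x) j =
      fderiv ℝ (fun y => fderiv ℝ G y (EuclideanSpace.single j 1)) x v := by
  rw [fderiv_apply_eq_dotProduct_gradient]
  simp only [vecMul, dotProduct, hessianMatrix, of_apply, toVec,
    gradient_apply_eq_fderiv_single]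

theorem deriv_comp_eq_dotProduct_gradient {G : EuclideanSpace ℝ (Fin N) → ℝ}
    {k : ℝ → EuclideanSpace ℝ (Fin N)} {l : ℝ} (hG : DifferentiableAt ℝ G (k l))
    (hk : DifferentiableAt ℝ k l) :
    deriv (fun s => G (k s)) l = toVec (deriv k l) ⬝ᵥ toVec (gradient G (k l)) := by
  have hGk : HasDerivAt (fun s => G (k s)) (fderiv ℝ G (k l) (deriv k l)) l :=
    hG.hasFDerivAt.comp_hasDerivAt l hk.hasDerivAt
  rw [hGk.deriv, fderiv_apply_eq_dotProduct_gradient]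

theorem vecMul_hessianMatrix_eq_gradient_of_gradient_eq_smul
    {G H : EuclideanSpace ℝ (Fin N) → ℝ} {k : ℝ → EuclideanSpace ℝ (Fin N)} {l : ℝ}
    (hG : ContDiff ℝ 2 G) (hH : ContDiff ℝ 2 H) (hk : DifferentiableAt ℝ k l)
    (hGH : ∀ᶠ s in 𝓝 l, gradient G (k s) = (s - l) • gradient H (k s)) :
    toVec (deriv k l) ᵥ* hessianMatrix G (k l) = toVec (gradient H (k l)) := by
  funext j
  set e : EuclideanSpace ℝ (Fin N) := EuclideanSpace.single j 1
  have hGk : HasDerivAt (fun s => fderiv ℝ G (k s) e)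
      ((toVec (deriv k l) ᵥ* hessianMatrix G (k l)) j) l := by
    rw [vecMul_hessianMatrix_apply]
    exact (hG.differentiable_fderiv_apply e _).hasFDerivAt.comp_hasDerivAt l hk.hasDerivAt
  have hHk : HasDerivAt (fun s => (s - l) * fderiv ℝ H (k s) e)
      (toVec (gradient H (k l)) j) l := by
    have hHe : HasDerivAt (fun s => fderiv ℝ H (k s) e)
        (fderiv ℝ (fun y => fderiv ℝ H y e) (k l) (deriv k l)) l :=
      (hH.differentiable_fderiv_apply e _).hasFDerivAt.comp_hasDerivAt l hk.hasDerivAt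
    simpa [toVec, gradient_apply_eq_fderiv_single, e] using
      ((hasDerivAt_id' l).sub_const l).fun_mul hHe
  have hGHk : (fun s => fderiv ℝ G (k s) e) =ᶠ[𝓝 l]
      fun s => (s - l) * fderiv ℝ H (k s) e := by
    filter_upwards [hGH] with s hs
    rw [← gradient_apply_eq_fderiv_single, ← gradient_apply_eq_fderiv_single, hs]
    rfl
  exact hGk.unique (hHk.congr_of_eventuallyEq hGHk)

end EuclideanSpace

/-- Along a λ-parametrized Lagrange solution curve
`∇F(k λ) = λ • ∇H(k λ)` with invertible Hessian `M(λ)` of `F − λH` at `k λ` and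
`R(λ) = ∇H(k λ)`, the values `h(λ) = H(k λ)` and `f(λ) = F(k λ)` satisfy
`h'(λ) = ⟨R(λ), M(λ)⁻¹ R(λ)⟩` and `f'(λ) = λ · ⟨R(λ), M(λ)⁻¹ R(λ)⟩`. -/
theorem deriv_h_and_f_along_lambda_curve {N : ℕ}
    (F H : EuclideanSpace ℝ (Fin N) → ℝ)
    (hF : ContDiff ℝ 2 F) (hH : ContDiff ℝ 2 H)
    (k : ℝ → EuclideanSpace ℝ (Fin N)) (hk : Differentiable ℝ k)
    (a b : ℝ)
    (hLag : ∀ l ∈ Set.Ioo a b, gradient F (k l) = l • gradient H (k l))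
    (hinv : ∀ l ∈ Set.Ioo a b,
      (hessianMatrix (fun x => F x - l * H x) (k l)).det ≠ 0) :
    ∀ l ∈ Set.Ioo a b,
      deriv (fun s => H (k s)) l =
        dotProduct (toVec (gradient H (k l)))
          ((hessianMatrix (fun x => F x - l * H x) (k l))⁻¹.mulVec
            (toVec (gradient H (k l)))) ∧
      deriv (fun s => F (k s)) l =
        l * dotProduct (toVec (gradient H (k l)))
          ((hessianMatrix (fun x => F x - l * H x) (k l))⁻¹.mulVec
            (toVec (gradient H (k l)))) := by
  intro l hl
  have hFd : Differentiable ℝ F := hF.differentiable (by norm_num)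
  have hHd : Differentiable ℝ H := hH.differentiable (by norm_num)
  set M := hessianMatrix (fun x => F x - l * H x) (k l)
  set R := toVec (gradient H (k l))
  have hcurve : ∀ᶠ s in 𝓝 l,
      gradient (fun x => F x - l * H x) (k s) = (s - l) • gradient H (k s) := by
    filter_upwards [Ioo_mem_nhds hl.1 hl.2] with s hs
    rw [gradient_sub_const_mul l (hFd _) (hHd _), hLag s hs, sub_smul]
  have hkM : toVec (deriv k l) ᵥ* M = R :=
    vecMul_hessianMatrix_eq_gradient_of_gradient_eq_smul (hF.sub (contDiff_const.mul hH)) hH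
      (hk l) hcurve
  have hk' : R ᵥ* M⁻¹ = toVec (deriv k l) := by
    rw [← hkM, vecMul_vecMul, mul_nonsing_inv _ (isUnit_iff_ne_zero.mpr (hinv l hl)), vecMul_one]
  have hquad : R ⬝ᵥ (M⁻¹ *ᵥ R) = toVec (deriv k l) ⬝ᵥ R := by
    rw [dotProduct_mulVec, hk']
  refine ⟨?_, ?_⟩
  · rw [deriv_comp_eq_dotProduct_gradient (hHd _) (hk l), hquad]
  · rw [deriv_comp_eq_dotProduct_gradient (hFd _) (hk l), hLag l hl, hquad]
    exact dotProduct_smul l _ _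
end
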